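/- arXiv:2102.01383 — 2 statements merged into one kernel-verified Lean document; each statement's English description precedes it below -/
import Mathlib

section
/- Consider a deterministic MDP with dynamics f, stage cost L, discount γ ∈ (0,1], optimal value V*, optimal action-value Q*(s,a) = L(s,a) + γ V*(f(s,a)), and modified stage cost L̃(s,a) := L(s,a) + (γ−1) V*(f(s,a)). Suppose that along the optimal trajectory from s₀, V*(s_k) → v_∞ as k → ∞ for some finite constant v_∞. Then the undiscounted infinite-horizon value of π* with stage cost L̃ satisfies Ṽ(s₀) := Σ_{k=0}^{∞} L̃(s_k, π*(s_k)) = V*(s₀) − v_∞, and Q̃(s,a) := L̃(s,a) + Ṽ(f(s,a)) = Q*(s,a) − v_∞ for all s on the trajectory with a arbitrary (assuming the trajectory from f(s,a) under π* also converges with the same limit). -/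
open Filter

/- Along the closed-loop trajectory the Bellman equation turns the modified stage cost into a
difference of consecutive values, `L̃(s_k, π*(s_k)) = V*(s_k) - V*(s_{k+1})`, so the partial sums
telescope to `V*(s₀) - V*(s_N) → V*(s₀) - v_∞`. The identity for `Q̃` is the one-step version
`L̃(s,a) + V*(f(s,a)) = Q*(s,a)` of the same computation. -/

theorem Filter.Tendsto.sum_range_sub_succ {M : Type*} [AddCommGroup M] [TopologicalSpace M]
    [IsTopologicalAddGroup M] {v : ℕ → M} {l : M} (h : Tendsto v atTop (nhds l)) :
    Tendsto (fun N => ∑ k ∈ Finset.range N, (v k - v (k + 1))) atTop (nhds (v 0 - l)) := by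
  simpa only [Finset.sum_range_sub'] using tendsto_const_nhds.sub h

section ModifiedCost

variable {S A : Type*} {f : S → A → S} {L : S → A → ℝ} {γ : ℝ} {V : S → ℝ}
  {Q : S → A → ℝ} {Ltil : S → A → ℝ}

theorem modifiedCost_add_value (hQ : ∀ s a, Q s a = L s a + γ * V (f s a))
    (hLtil : ∀ s a, Ltil s a = L s a + (γ - 1) * V (f s a)) (s : S) (a : A) :
    Ltil s a + V (f s a) = Q s a := by
  rw [hLtil, hQ]
  ring

theorem modifiedCost_policy_eq_sub {π : S → A} (hQ : ∀ s a, Q s a = L s a + γ * V (f s a))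
    (hBellmanPol : ∀ s, V s = Q s (π s))
    (hLtil : ∀ s a, Ltil s a = L s a + (γ - 1) * V (f s a)) (s : S) :
    Ltil s (π s) = V s - V (f s (π s)) := by
  rw [hBellmanPol s, ← modifiedCost_add_value hQ hLtil]
  ring

end ModifiedCost

theorem stmt_2_general {S A : Type*} (f : S → A → S) (L : S → A → ℝ) (γ : ℝ)
    (V : S → ℝ) (π : S → A) (vinf : ℝ)
    (Q : S → A → ℝ) (hQ : ∀ s a, Q s a = L s a + γ * V (f s a))
    (hBellmanPol : ∀ s : S, V s = Q s (π s))
    (Ltil : S → A → ℝ)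
    (hLtil : ∀ s a, Ltil s a = L s a + (γ - 1) * V (f s a))
    (traj : S → ℕ → S)
    (htraj0 : ∀ s, traj s 0 = s)
    (htraj : ∀ s k, traj s (k + 1) = f (traj s k) (π (traj s k)))
    (hconv : ∀ s : S, Tendsto (fun k => V (traj s k)) atTop (nhds vinf)) :
    (∀ s : S,
      Tendsto (fun N => ∑ k ∈ Finset.range N, Ltil (traj s k) (π (traj s k)))
        atTop (nhds (V s - vinf))) ∧
    (∀ s : S, ∀ a : A, Ltil s a + (V (f s a) - vinf) = Q s a - vinf) := by
  refine ⟨fun s => ?_, fun s a => ?_⟩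
  · have hstep : ∀ k, Ltil (traj s k) (π (traj s k)) = V (traj s k) - V (traj s (k + 1)) :=
      fun k => by rw [htraj, modifiedCost_policy_eq_sub hQ hBellmanPol hLtil]
    simpa only [hstep, htraj0] using (hconv s).sum_range_sub_succ
  · rw [← modifiedCost_add_value hQ hLtil s a]
    ring

/-- Deterministic MDP with modified stage cost
`L̃(s,a) = L(s,a) + (γ−1)V*(f(s,a))`, `Q*(s,a) = L(s,a) + γ V*(f(s,a))`.
If along the optimal closed-loop trajectory from any considered state the value
`V*(s_k)` converges to a finite constant `v_∞`, then the undiscounted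
infinite-horizon value of `π*` with stage cost `L̃` is
`Ṽ(s) = V*(s) − v_∞` (as the limit of the partial sums), and
`Q̃(s,a) = L̃(s,a) + Ṽ(f(s,a)) = Q*(s,a) − v_∞`. -/
theorem stmt_2 {S A : Type*} (f : S → A → S) (L : S → A → ℝ) (γ : ℝ)
    (hγ0 : 0 < γ) (hγ1 : γ ≤ 1)
    (V : S → ℝ) (π : S → A) (vinf : ℝ)
    (Q : S → A → ℝ) (hQ : ∀ s a, Q s a = L s a + γ * V (f s a))
    (hBellmanPol : ∀ s : S, V s = Q s (π s))
    (hBellmanMin : ∀ s : S, ∀ a : A, V s ≤ Q s a)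
    (Ltil : S → A → ℝ)
    (hLtil : ∀ s a, Ltil s a = L s a + (γ - 1) * V (f s a))
    (traj : S → ℕ → S)
    (htraj0 : ∀ s, traj s 0 = s)
    (htraj : ∀ s k, traj s (k + 1) = f (traj s k) (π (traj s k)))
    (hconv : ∀ s : S, Tendsto (fun k => V (traj s k)) atTop (nhds vinf)) :
    (∀ s : S,
      Tendsto (fun N => ∑ k ∈ Finset.range N, Ltil (traj s k) (π (traj s k)))
        atTop (nhds (V s - vinf))) ∧
    (∀ s : S, ∀ a : A, Ltil s a + (V (f s a) - vinf) = Q s a - vinf) :=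
  stmt_2_general f L γ V π vinf Q hQ hBellmanPol Ltil hLtil traj htraj0 htraj hconv
end

section
/- For the scalar discounted LQR with A = 2, B = 1, T = 1, U = 0, R = 1 and discount γ ∈ (0,1], the optimal feedback gain K(γ) = 4γ/(1 − 3γ + √((1 − 5γ)² + 4γ)) satisfies K(γ) ∈ (1, 3) if and only if γ > 1/3. In particular, the discounted-optimal policy is stabilizing exactly when γ ∈ (1/3, 1]. -/
/-- For the scalar discounted LQR (`A = 2, B = 1, T = 1, U = 0, R = 1`),
the optimal feedback gain `K(γ) = 4γ/(1 − 3γ + √((1−5γ)² + 4γ))` lies in the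
stabilizing interval `(1, 3)` if and only if `γ > 1/3`, for `γ ∈ (0,1]`. -/
theorem stmt_7 (γ : ℝ) (hγ0 : 0 < γ) (hγ1 : γ ≤ 1) :
    (4 * γ / (1 - 3 * γ + Real.sqrt ((1 - 5 * γ) ^ 2 + 4 * γ)) ∈ Set.Ioo (1 : ℝ) 3) ↔
      1 / 3 < γ := by
  set D := Real.sqrt ((1 - 5 * γ) ^ 2 + 4 * γ) with hD
  have hDnn : 0 ≤ D := Real.sqrt_nonneg _
  have hD2 : D ^ 2 = (1 - 5 * γ) ^ 2 + 4 * γ := by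
    rw [hD, Real.sq_sqrt]; nlinarith [sq_nonneg (1 - 5 * γ)]
  have hden : 0 < 1 - 3 * γ + D := by nlinarith [sq_nonneg (D - (3 * γ - 1))]
  rw [Set.mem_Ioo]
  constructor
  · rintro ⟨h1, _⟩
    rw [lt_div_iff₀ hden] at h1
    nlinarith
  · intro hγ
    constructor
    · rw [lt_div_iff₀ hden]
      nlinarith [sq_nonneg (D - (7 * γ - 1))]
    · rw [div_lt_iff₀ hden]
      nlinarith [sq_nonneg (3 * D - (13 * γ - 3))]
end
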